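/- arXiv:1503.01942 — 4 statements merged into one kernel-verified Lean document; each statement's English description precedes it below -/
import Mathlib

section
/- Let l ≥ 1. In the field ℚ(s₁,…,s_l)((T)) of formal Laurent series in T over the rational function field ℚ(s₁,…,s_l), the l+1 elements 1+T, (1+T)^{−s₁}, …, (1+T)^{−s_l} are algebraically independent over ℚ. Consequently, the rule X ↦ 1+T, Y_i ↦ (1+T)^{−s_i} (i = 1,…,l) extends to an injective field homomorphism from the rational function field ℚ(X,Y₁,…,Y_l) into ℚ(s₁,…,s_l)((T)). -/
/-- The generalized binomial coefficient `binom(e, d) = e(e-1)⋯(e-d+1)/d!` in a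
commutative `ℚ`-algebra. -/
noncomputable def binomCoeff {R : Type*} [CommRing R] [Algebra ℚ R] (e : R) (d : ℕ) : R :=
  ((Nat.factorial d : ℚ)⁻¹) • ∏ i ∈ Finset.range d, (e - (i : R))

/-- The formal power series `(1+T)^e = Σ_{d ≥ 0} binom(e,d) T^d` over a commutative
`ℚ`-algebra. -/
noncomputable def onePlusTPow {R : Type*} [CommRing R] [Algebra ℚ R] (e : R) :
    PowerSeries R :=
  PowerSeries.mk (binomCoeff e)

open PowerSeries

lemma binomCoeff_zero {R : Type*} [CommRing R] [Algebra ℚ R] (e : R) :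
    binomCoeff e 0 = 1 := by simp [binomCoeff]

lemma binomCoeff_one {R : Type*} [CommRing R] [Algebra ℚ R] (e : R) :
    binomCoeff e 1 = e := by simp [binomCoeff]

lemma binomCoeff_succ {R : Type*} [CommRing R] [Algebra ℚ R] (e : R) (n : ℕ) :
    ((n : R) + 1) * binomCoeff e (n + 1) = (e - n) * binomCoeff e n := by
  have h1 : ((n : R) + 1) = algebraMap ℚ R ((n : ℚ) + 1) := by
    simp
  have key : ((n : ℚ) + 1) * ((Nat.factorial (n+1) : ℚ))⁻¹ = ((Nat.factorial n : ℚ))⁻¹ := by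
    rw [Nat.factorial_succ]
    have h2 : ((n : ℚ) + 1) ≠ 0 := by positivity
    have h3 : (Nat.factorial n : ℚ) ≠ 0 := by
      exact_mod_cast Nat.cast_ne_zero.mpr (Nat.factorial_ne_zero n)
    field_simp
    push_cast
    ring
  rw [binomCoeff, binomCoeff, Finset.prod_range_succ, h1, Algebra.smul_def, Algebra.smul_def,
    ← mul_assoc, ← map_mul, key]
  ring

noncomputable def Dop (K : Type*) [CommRing K] [Algebra ℚ K] :
    Module.End K (PowerSeries K) where
  toFun f := (1 + PowerSeries.X) * (PowerSeries.derivative K f)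
  map_add' f g := by simp [mul_add]
  map_smul' a f := by simp [mul_smul_comm]

lemma Dop_apply {K : Type*} [CommRing K] [Algebra ℚ K] (f : PowerSeries K) :
    Dop K f = (1 + PowerSeries.X) * (PowerSeries.derivative K f) := rfl

lemma Dop_onePlusTPow {K : Type*} [CommRing K] [Algebra ℚ K] (e : K) :
    Dop K (onePlusTPow e) = e • onePlusTPow e := by
  ext n
  rw [Dop_apply, add_mul, one_mul]
  cases n with
  | zero =>
    rw [map_add]
    have hx : (PowerSeries.coeff (R := K) 0) (PowerSeries.X * (PowerSeries.derivative K (onePlusTPow e)))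
        = 0 := by
      rw [PowerSeries.coeff_zero_eq_constantCoeff_apply, map_mul, PowerSeries.constantCoeff_X,
        zero_mul]
    rw [hx, add_zero, PowerSeries.coeff_derivative]
    simp [onePlusTPow, binomCoeff_one, binomCoeff_zero]
  | succ n =>
    simp only [map_add, PowerSeries.coeff_succ_X_mul, PowerSeries.coeff_derivative,
      onePlusTPow, PowerSeries.coeff_mk, LinearMap.map_smul, smul_eq_mul]
    have h := binomCoeff_succ e (n + 1)
    push_cast at h ⊢
    linear_combination h

lemma Dop_one_add_X {K : Type*} [CommRing K] [Algebra ℚ K] :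
    Dop K (1 + PowerSeries.X) = (1 : K) • (1 + PowerSeries.X) := by
  rw [Dop_apply]
  simp

lemma Dop_mul {K : Type*} [CommRing K] [Algebra ℚ K] (a b : K) (f g : PowerSeries K)
    (hf : Dop K f = a • f) (hg : Dop K g = b • g) :
    Dop K (f * g) = (a + b) • (f * g) := by
  rw [Dop_apply] at *
  rw [Derivation.leibniz, smul_eq_mul, smul_eq_mul, mul_add]
  rw [show (1 + PowerSeries.X) * (f * PowerSeries.derivative K g) =
    f * ((1 + PowerSeries.X) * PowerSeries.derivative K g) by ring, hg]
  rw [show (1 + PowerSeries.X) * (g * PowerSeries.derivative K f) =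
    g * ((1 + PowerSeries.X) * PowerSeries.derivative K f) by ring, hf]
  rw [mul_smul_comm, mul_smul_comm, add_smul, mul_comm g f]
  abel

lemma Dop_pow {K : Type*} [CommRing K] [Algebra ℚ K] (a : K) (f : PowerSeries K)
    (hf : Dop K f = a • f) (n : ℕ) :
    Dop K (f ^ n) = ((n : K) * a) • (f ^ n) := by
  induction n with
  | zero => simp [Dop_apply]
  | succ n ih =>
    rw [pow_succ]
    rw [Dop_mul ((n : K) * a) a _ _ ih hf]
    push_cast
    ring_nf

lemma Dop_prod {K : Type*} [CommRing K] [Algebra ℚ K] {ι : Type*} [DecidableEq ι]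
    (t : Finset ι) (a : ι → K) (v : ι → PowerSeries K)
    (h : ∀ j, Dop K (v j) = a j • v j) (n : ι → ℕ) :
    Dop K (∏ j ∈ t, v j ^ n j) = (∑ j ∈ t, (n j : K) * a j) • ∏ j ∈ t, v j ^ n j := by
  induction t using Finset.induction with
  | empty => simp [Dop_apply]
  | @insert i t hi ih =>
    rw [Finset.prod_insert hi, Finset.sum_insert hi]
    exact Dop_mul _ _ _ _ (Dop_pow _ _ (h i) _) ih


open PowerSeries

lemma algIndep_powerSeries {K : Type*} [Field K] [Algebra ℚ K] {l : ℕ} (s : Fin l → K)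
    (hμinj : Function.Injective (fun m : Fin (l + 1) →₀ ℕ =>
      ∑ j, (m j : K) * (Fin.cons 1 (fun i => -(s i)) : Fin (l + 1) → K) j)) :
    AlgebraicIndependent ℚ
      (Fin.cons (1 + PowerSeries.X) (fun i => onePlusTPow (-(s i))) :
        Fin (l + 1) → PowerSeries K) := by
  classical
  set g : Fin (l + 1) → PowerSeries K :=
    Fin.cons (1 + PowerSeries.X) (fun i => onePlusTPow (-(s i))) with hg
  set ev : Fin (l + 1) → K := Fin.cons 1 (fun i => -(s i)) with hev_def
  have hev : ∀ j, Dop K (g j) = ev j • g j := by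
    intro j
    refine Fin.cases ?_ ?_ j
    · simpa [hg, hev_def] using Dop_one_add_X (K := K)
    · intro i
      simpa [hg, hev_def] using Dop_onePlusTPow (-(s i))
  set V : (Fin (l + 1) →₀ ℕ) → PowerSeries K := fun m => ∏ j, g j ^ m j with hVdef
  set μ : (Fin (l + 1) →₀ ℕ) → K := fun m => ∑ j, (m j : K) * ev j with hμdef
  have hV : ∀ m, Dop K (V m) = μ m • V m := fun m => Dop_prod Finset.univ ev g hev m
  have hgc : ∀ j, PowerSeries.constantCoeff (R := K) (g j) = 1 := by
    intro j
    refine Fin.cases ?_ ?_ j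
    · simp [hg]
    · intro i
      simp [hg, onePlusTPow, PowerSeries.constantCoeff_mk, binomCoeff]
  have hVne : ∀ m, V m ≠ 0 := by
    intro m h0
    have h1 : PowerSeries.constantCoeff (R := K) (V m) = 1 := by
      rw [hVdef]
      simp only [map_prod, map_pow, hgc, one_pow, Finset.prod_const_one]
    rw [h0, map_zero] at h1
    exact zero_ne_one h1
  have hlin : LinearIndependent K V :=
    (Dop K).eigenvectors_linearIndependent' μ hμinj V
      (fun m => ⟨Module.End.mem_eigenspace_iff.mpr (hV m), hVne m⟩)
  rw [algebraicIndependent_iff]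
  intro p hp
  have hexp : MvPolynomial.aeval g p = ∑ m ∈ p.support,
      (algebraMap ℚ K (MvPolynomial.coeff m p)) • V m := by
    conv_lhs => rw [MvPolynomial.as_sum p]
    rw [map_sum]
    refine Finset.sum_congr rfl fun m _ => ?_
    rw [MvPolynomial.aeval_monomial, PowerSeries.algebraMap_apply,
      ← PowerSeries.smul_eq_C_mul, hVdef]
    congr 1
    exact Finsupp.prod_fintype _ _ (fun j => pow_zero (g j))
  have hz : ∀ m ∈ p.support, algebraMap ℚ K (MvPolynomial.coeff m p) = 0 :=
    linearIndependent_iff'.mp hlin p.support _ (by rw [← hexp, hp])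
  have hinjQ : Function.Injective (algebraMap ℚ K) := (algebraMap ℚ K).injective
  apply MvPolynomial.ext
  intro m
  rw [MvPolynomial.coeff_zero]
  by_cases hm : m ∈ p.support
  · exact hinjQ (by rw [hz m hm, map_zero])
  · exact MvPolynomial.notMem_support_iff.mp hm


lemma mu_injective {K : Type*} [Field K] [Algebra ℚ K] {l : ℕ} (s : Fin l → K)
    (hs_inj : Function.Injective (MvPolynomial.aeval (R := ℚ) s)) :
    Function.Injective (fun m : Fin (l + 1) →₀ ℕ =>
      ∑ j, (m j : K) * (Fin.cons 1 (fun i => -(s i)) : Fin (l + 1) → K) j) := by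
  classical
  have haevalQ : ∀ m : Fin (l + 1) →₀ ℕ,
      MvPolynomial.aeval s (MvPolynomial.C (m 0 : ℚ) - ∑ i : Fin l,
        MvPolynomial.monomial (Finsupp.single i 1) ((m i.succ : ℚ)))
      = ∑ j, (m j : K) * (Fin.cons 1 (fun i => -(s i)) : Fin (l + 1) → K) j := by
    intro m
    simp only [map_sub, map_sum, MvPolynomial.aeval_C, MvPolynomial.aeval_monomial,
      Fin.sum_univ_succ, Fin.cons_zero, Fin.cons_succ]
    simp [Finsupp.prod_single_index, mul_neg, sub_eq_add_neg, Finset.sum_neg_distrib]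
  intro m m' hmm'
  simp only at hmm'
  have hQ : (MvPolynomial.C (m 0 : ℚ) - ∑ i : Fin l,
        MvPolynomial.monomial (Finsupp.single i 1) ((m i.succ : ℚ)))
      = (MvPolynomial.C (m' 0 : ℚ) - ∑ i : Fin l,
        MvPolynomial.monomial (Finsupp.single i 1) ((m' i.succ : ℚ))) := by
    apply hs_inj
    rw [haevalQ, haevalQ, hmm']
  have h0 : (m 0 : ℚ) = (m' 0 : ℚ) := by
    have h := congrArg (MvPolynomial.constantCoeff) hQ
    simpa [MvPolynomial.constantCoeff_monomial, Finsupp.single_eq_zero] using h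
  have hi : ∀ i : Fin l, m i.succ = m' i.succ := by
    intro i
    have hne : ((0 : Fin l →₀ ℕ) = Finsupp.single i 1) ↔ False := by
      simp [eq_comm, Finsupp.single_eq_zero]
    have hcond : ∀ j : Fin l,
        (Finsupp.single j 1 = Finsupp.single i 1) ↔ j = i := by
      intro j
      constructor
      · intro h
        exact (Finsupp.single_left_inj one_ne_zero).mp h
      · rintro rfl; rfl
    have h := congrArg (MvPolynomial.coeff (Finsupp.single i 1)) hQ
    simp only [MvPolynomial.coeff_sub, MvPolynomial.coeff_sum, MvPolynomial.coeff_monomial,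
      MvPolynomial.coeff_C, hcond, hne] at h
    simpa [Finsupp.single_eq_zero, Finset.sum_ite_eq'] using h
  ext j
  refine Fin.cases ?_ ?_ j
  · exact_mod_cast h0
  · intro i
    exact hi i

set_option maxHeartbeats 2000000 in
/-- In the field `ℚ(s₁,…,s_l)((T))` of formal Laurent series over the rational
function field `ℚ(s₁,…,s_l)`, the `l+1` elements `1+T, (1+T)^{-s₁}, …, (1+T)^{-s_l}` are
algebraically independent over `ℚ`; consequently `X ↦ 1+T`, `Y_i ↦ (1+T)^{-s_i}` extends to
an injective field homomorphism `ℚ(X,Y₁,…,Y_l) → ℚ(s₁,…,s_l)((T))`. -/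
theorem statement1 (l : ℕ) (hl : 1 ≤ l) :
    AlgebraicIndependent ℚ
      (Fin.cons
        ((HahnSeries.ofPowerSeries ℤ (FractionRing (MvPolynomial (Fin l) ℚ)))
          ((1 : PowerSeries (FractionRing (MvPolynomial (Fin l) ℚ))) + PowerSeries.X))
        (fun i : Fin l =>
          (HahnSeries.ofPowerSeries ℤ (FractionRing (MvPolynomial (Fin l) ℚ)))
            (onePlusTPow
              (-(algebraMap (MvPolynomial (Fin l) ℚ) (FractionRing (MvPolynomial (Fin l) ℚ))
                  (MvPolynomial.X i))))) :
        Fin (l + 1) → LaurentSeries (FractionRing (MvPolynomial (Fin l) ℚ))) ∧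
    ∃ φ : FractionRing (MvPolynomial (Fin (l + 1)) ℚ) →+*
        LaurentSeries (FractionRing (MvPolynomial (Fin l) ℚ)),
      Function.Injective φ ∧
      φ (algebraMap (MvPolynomial (Fin (l + 1)) ℚ) (FractionRing (MvPolynomial (Fin (l + 1)) ℚ))
          (MvPolynomial.X 0)) =
        (HahnSeries.ofPowerSeries ℤ (FractionRing (MvPolynomial (Fin l) ℚ)))
          ((1 : PowerSeries (FractionRing (MvPolynomial (Fin l) ℚ))) + PowerSeries.X) ∧
      ∀ i : Fin l,
        φ (algebraMap (MvPolynomial (Fin (l + 1)) ℚ)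
            (FractionRing (MvPolynomial (Fin (l + 1)) ℚ)) (MvPolynomial.X i.succ)) =
          (HahnSeries.ofPowerSeries ℤ (FractionRing (MvPolynomial (Fin l) ℚ)))
            (onePlusTPow
              (-(algebraMap (MvPolynomial (Fin l) ℚ) (FractionRing (MvPolynomial (Fin l) ℚ))
                  (MvPolynomial.X i)))) := by
  classical
  let K := FractionRing (MvPolynomial (Fin l) ℚ)
  let s : Fin l → K := fun i => algebraMap (MvPolynomial (Fin l) ℚ) K (MvPolynomial.X i)
  -- injectivity of evaluation at s
  have hs_ring : (MvPolynomial.aeval (R := ℚ) s).toRingHom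
      = algebraMap (MvPolynomial (Fin l) ℚ) K := by
    apply MvPolynomial.ringHom_ext
    · intro q
      have h : ((algebraMap (MvPolynomial (Fin l) ℚ) K).comp
          (MvPolynomial.C : ℚ →+* MvPolynomial (Fin l) ℚ)) = algebraMap ℚ K :=
        Subsingleton.elim _ _
      show MvPolynomial.aeval s (MvPolynomial.C q) = _
      rw [MvPolynomial.aeval_C]
      exact (RingHom.congr_fun h q).symm
    · intro i
      simp [s]
  have hs_inj : Function.Injective (MvPolynomial.aeval (R := ℚ) s) := by
    have h : ⇑(MvPolynomial.aeval (R := ℚ) s) = ⇑(algebraMap (MvPolynomial (Fin l) ℚ) K) := by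
      rw [← hs_ring]; rfl
    rw [h]
    exact IsFractionRing.injective (MvPolynomial (Fin l) ℚ) K
  have hAIg : AlgebraicIndependent ℚ
      (Fin.cons (1 + PowerSeries.X) (fun i => onePlusTPow (-(s i))) :
        Fin (l + 1) → PowerSeries K) :=
    algIndep_powerSeries s (mu_injective s hs_inj)
  -- transport along ofPowerSeries
  let Φ : PowerSeries K →ₐ[ℚ] LaurentSeries K :=
    (HahnSeries.ofPowerSeries ℤ K).toRatAlgHom
  have hΦinj : Function.Injective Φ := HahnSeries.ofPowerSeries_injective
  have hfam : (Fin.cons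
        ((HahnSeries.ofPowerSeries ℤ K) ((1 : PowerSeries K) + PowerSeries.X))
        (fun i : Fin l => (HahnSeries.ofPowerSeries ℤ K) (onePlusTPow (-(s i)))) :
        Fin (l + 1) → LaurentSeries K)
      = ⇑Φ ∘ (Fin.cons (1 + PowerSeries.X) (fun i => onePlusTPow (-(s i))) :
        Fin (l + 1) → PowerSeries K) := by
    funext j
    refine Fin.cases ?_ ?_ j
    · simp only [Fin.cons_zero, Function.comp_apply]
      rfl
    · intro i
      simp only [Fin.cons_succ, Function.comp_apply]
      rfl
  have hAI : AlgebraicIndependent ℚ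
      (Fin.cons
        ((HahnSeries.ofPowerSeries ℤ K) ((1 : PowerSeries K) + PowerSeries.X))
        (fun i : Fin l => (HahnSeries.ofPowerSeries ℤ K) (onePlusTPow (-(s i)))) :
        Fin (l + 1) → LaurentSeries K) := by
    rw [hfam]
    exact hAIg.map' hΦinj
  refine ⟨hAI, ?_⟩
  -- the field homomorphism
  have hinj : Function.Injective
      (MvPolynomial.aeval (R := ℚ)
        (Fin.cons
          ((HahnSeries.ofPowerSeries ℤ K) ((1 : PowerSeries K) + PowerSeries.X))
          (fun i : Fin l => (HahnSeries.ofPowerSeries ℤ K) (onePlusTPow (-(s i)))) :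
          Fin (l + 1) → LaurentSeries K)) :=
    algebraicIndependent_iff_injective_aeval.mp hAI
  have hinj' : Function.Injective
      ((MvPolynomial.aeval (R := ℚ)
        (Fin.cons
          ((HahnSeries.ofPowerSeries ℤ K) ((1 : PowerSeries K) + PowerSeries.X))
          (fun i : Fin l => (HahnSeries.ofPowerSeries ℤ K) (onePlusTPow (-(s i)))) :
          Fin (l + 1) → LaurentSeries K)).toRingHom) := hinj
  refine ⟨IsFractionRing.lift hinj', (by apply RingHom.injective), ?_, ?_⟩
  · rw [IsFractionRing.lift_algebraMap]
    show MvPolynomial.aeval _ (MvPolynomial.X 0) = _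
    rw [MvPolynomial.aeval_X]
    exact Fin.cons_zero _ _
  · intro i
    rw [IsFractionRing.lift_algebraMap]
    show MvPolynomial.aeval _ (MvPolynomial.X i.succ) = _
    rw [MvPolynomial.aeval_X]
    exact Fin.cons_succ _ _ _
end

section
/- Let W ∈ ℚ(X,Y) be the rational function W(X,Y) = (X²Y⁶ + X²Y³ − 4XY³ + Y³ + 1)(1−Y)² / ((1 − X⁴Y⁴)(1 − X²Y²)(1 − XY)²). Then W satisfies the functional equation W(X^{−1}, Y^{−1}) = X⁶ · W(X,Y) as an identity in the field ℚ(X,Y) of rational functions in two variables over ℚ. -/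
open MvPolynomial

noncomputable section Statement5Aux

local notation "R2" => MvPolynomial (Fin 2) ℚ
local notation "K2" => FractionRing (MvPolynomial (Fin 2) ℚ)

private lemma emb_inj5 : Function.Injective (algebraMap R2 K2) :=
  IsFractionRing.injective _ _

private lemma x_ne5 (i : Fin 2) : algebraMap R2 K2 (X i) ≠ 0 :=
  fun h => X_ne_zero i (emb_inj5 (by simpa using h))

/-- evaluation at the inverses of the variables -/
private def finv : MvPolynomial (Fin 2) ℚ →ₐ[ℚ] FractionRing (MvPolynomial (Fin 2) ℚ) :=
  aeval (fun i => (algebraMap R2 K2 (X i))⁻¹)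

private lemma finv_ne_zero {p : R2} (hp : p ≠ 0) : finv p ≠ 0 := by
  classical
  set N := p.totalDegree with hN
  set T : Fin 2 →₀ ℕ := Finsupp.equivFunOnFinite.symm (fun _ => N) with hT
  have hTapp : ∀ i, T i = N := fun i => rfl
  have hle : ∀ m ∈ p.support, ∀ i, m i ≤ N := by
    intro m hm i
    have h1 : m i ≤ m.sum fun _ e => e := by
      by_cases h : i ∈ m.support
      · exact Finset.single_le_sum (fun j _ => Nat.zero_le _) h
      · simp [Finsupp.notMem_support_iff.mp h]
    exact h1.trans (le_totalDegree hm)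
  set q : R2 := ∑ m ∈ p.support, monomial (T - m) (coeff m p) with hq
  have hterm : ∀ m ∈ p.support,
      algebraMap R2 K2 (monomial T 1) *
        (algebraMap ℚ K2 (coeff m p) * ∏ i, ((algebraMap R2 K2 (X i))⁻¹) ^ m i) =
      algebraMap R2 K2 (monomial (T - m) (coeff m p)) := by
    intro m hm
    have hmono : ∀ (v : Fin 2 →₀ ℕ) (c : ℚ),
        algebraMap R2 K2 (monomial v c) =
          algebraMap ℚ K2 c * ∏ i, (algebraMap R2 K2 (X i)) ^ v i := by
      intro v c
      rw [monomial_eq, map_mul]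
      congr 1
      · rw [IsScalarTower.algebraMap_apply ℚ R2 K2, MvPolynomial.algebraMap_eq]
      · rw [Finsupp.prod_fintype _ _ (fun i => pow_zero _), map_prod]
        simp
    rw [hmono, hmono, map_one, one_mul, mul_left_comm]
    congr 1
    rw [← Finset.prod_mul_distrib]
    refine Finset.prod_congr rfl ?_
    intro i _
    rw [Finsupp.coe_tsub, Pi.sub_apply, hTapp i,
      pow_sub₀ _ (x_ne5 i) (hle m hm i), inv_pow]
  have key : algebraMap R2 K2 (monomial T 1) * finv p = algebraMap R2 K2 q := by
    conv_lhs => rw [p.as_sum]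
    rw [finv, map_sum, Finset.mul_sum, hq, map_sum]
    refine Finset.sum_congr rfl ?_
    intro m hm
    rw [aeval_monomial, Finsupp.prod_fintype _ _ (fun i => pow_zero _)]
    exact hterm m hm
  have hq0 : q ≠ 0 := by
    obtain ⟨m₀, hm₀⟩ := Finset.nonempty_iff_ne_empty.mpr
      (fun h => hp (support_eq_empty.mp h))
    intro h
    have hc := congrArg (coeff (T - m₀)) h
    rw [hq, coeff_sum, coeff_zero] at hc
    have hinj : ∀ m' ∈ p.support, T - m' = T - m₀ → m' = m₀ := by
      intro m' hm' he
      ext i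
      have h1 : N - m' i = N - m₀ i := by
        have h2 := DFunLike.congr_fun he i
        simpa [Finsupp.tsub_apply, hTapp i] using h2
      have b1 := hle m' hm' i
      have b2 := hle m₀ hm₀ i
      omega
    rw [Finset.sum_eq_single m₀] at hc
    · rw [coeff_monomial, if_pos rfl] at hc
      exact mem_support_iff.mp hm₀ hc
    · intro m' hm' hne
      rw [coeff_monomial, if_neg (fun he => hne (hinj m' hm' he))]
    · intro h
      exact absurd hm₀ h
  intro h0
  apply hq0
  apply emb_inj5
  rw [map_zero, ← key, h0, mul_zero]


private lemma finv_inj : Function.Injective finv := by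
  rw [injective_iff_map_eq_zero]
  intro p hp
  by_contra h
  exact finv_ne_zero h hp

private def phi0 : K2 →ₐ[ℚ] K2 := IsFractionRing.liftAlgHom (g := finv) finv_inj

private lemma phi0_algebraMap (p : R2) : phi0 (algebraMap R2 K2 p) = finv p := by
  simp [phi0, IsFractionRing.liftAlgHom_apply, IsFractionRing.lift_algebraMap]

private lemma phi0_X (i : Fin 2) :
    phi0 (algebraMap R2 K2 (X i)) = (algebraMap R2 K2 (X i))⁻¹ := by
  rw [phi0_algebraMap]; simp [finv]

private lemma phi0_invol : (phi0.toRingHom).comp phi0.toRingHom = RingHom.id K2 := by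
  apply IsLocalization.ringHom_ext (nonZeroDivisors R2)
  apply MvPolynomial.ringHom_ext
  · intro q
    have h1 : algebraMap R2 K2 (C q) = algebraMap ℚ K2 q := by
      rw [← MvPolynomial.algebraMap_eq, ← IsScalarTower.algebraMap_apply]
    simp only [RingHom.comp_apply, AlgHom.toRingHom_eq_coe, RingHom.coe_coe, RingHom.id_apply]
    rw [h1, AlgHom.commutes, AlgHom.commutes]
  · intro i
    simp only [RingHom.comp_apply, AlgHom.toRingHom_eq_coe, RingHom.coe_coe, RingHom.id_apply]
    rw [phi0_X, map_inv₀, phi0_X, inv_inv]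

private def phiEquiv : K2 ≃ₐ[ℚ] K2 :=
  AlgEquiv.ofAlgHom phi0 phi0
    (AlgHom.ext fun x => RingHom.congr_fun phi0_invol x)
    (AlgHom.ext fun x => RingHom.congr_fun phi0_invol x)

private lemma phiEquiv_X (i : Fin 2) :
    phiEquiv (algebraMap R2 K2 (X i)) = (algebraMap R2 K2 (X i))⁻¹ := phi0_X i

private lemma ha_aux {F : Type*} [Field F] (x y : F) (hx : x ≠ 0) (hy : y ≠ 0) :
    (x⁻¹ ^ 2 * y⁻¹ ^ 6 + x⁻¹ ^ 2 * y⁻¹ ^ 3 - 4 * x⁻¹ * y⁻¹ ^ 3 + y⁻¹ ^ 3 + 1) * (1 - y⁻¹) ^ 2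
      = (x⁻¹ ^ 2 * y⁻¹ ^ 8) *
        ((x ^ 2 * y ^ 6 + x ^ 2 * y ^ 3 - 4 * x * y ^ 3 + y ^ 3 + 1) * (1 - y) ^ 2) := by
  have hx1 : x * x⁻¹ = 1 := mul_inv_cancel₀ hx
  have hy1 : y * y⁻¹ = 1 := mul_inv_cancel₀ hy
  linear_combination (-y ^ 3 * y⁻¹ ^ 8 + 4 * y ^ 3 * x⁻¹ * y⁻¹ ^ 8 + 2 * y ^ 4 * y⁻¹ ^ 8 - 8 * y ^ 4 * x⁻¹ * y⁻¹ ^ 8 - y ^ 5 * y⁻¹ ^ 8 + 4 * y ^ 5 * x⁻¹ * y⁻¹ ^ 8 - y ^ 6 * y⁻¹ ^ 8 + 2 * y ^ 7 * y⁻¹ ^ 8 - y ^ 8 * y⁻¹ ^ 8 - x * y ^ 3 * x⁻¹ * y⁻¹ ^ 8 + 2 * x * y ^ 4 * x⁻¹ * y⁻¹ ^ 8 - x * y ^ 5 * x⁻¹ * y⁻¹ ^ 8 - x * y ^ 6 * x⁻¹ * y⁻¹ ^ 8 + 2 * x * y ^ 7 * x⁻¹ * y⁻¹ ^ 8 - x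 * y ^ 8 * x⁻¹ * y⁻¹ ^ 8) * hx1 + (-1 + 2 * y⁻¹ - y⁻¹ ^ 2 - y⁻¹ ^ 3 + 2 * y⁻¹ ^ 4 - y⁻¹ ^ 5 + 4 * x⁻¹ * y⁻¹ ^ 3 - 8 * x⁻¹ * y⁻¹ ^ 4 + 4 * x⁻¹ * y⁻¹ ^ 5 - x⁻¹ ^ 2 * y⁻¹ ^ 3 + 2 * x⁻¹ ^ 2 * y⁻¹ ^ 4 - x⁻¹ ^ 2 * y⁻¹ ^ 5 - x⁻¹ ^ 2 * y⁻¹ ^ 6 + 2 * x⁻¹ ^ 2 * y⁻¹ ^ 7 - y * y⁻¹ + 2 * y * y⁻¹ ^ 2 - y * y⁻¹ ^ 3 - y * y⁻¹ ^ 4 + 2 * y * y⁻¹ ^ 5 - y * y⁻¹ ^ 6 + 4 * y * x⁻¹ * y⁻¹ ^ 4 - 8 * y * x⁻¹ * y⁻¹ ^ 5 + 4 * y * x⁻¹ * y⁻¹ ^ 6 - y * x⁻¹ ^ 2 * y⁻¹ ^ 4 + 2 * y * x⁻¹ ^ 2 * y⁻¹ ^ 5 - y * x⁻¹ ^ 2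 * y⁻¹ ^ 6 - y * x⁻¹ ^ 2 * y⁻¹ ^ 7 - y ^ 2 * y⁻¹ ^ 2 + 2 * y ^ 2 * y⁻¹ ^ 3 - y ^ 2 * y⁻¹ ^ 4 - y ^ 2 * y⁻¹ ^ 5 + 2 * y ^ 2 * y⁻¹ ^ 6 - y ^ 2 * y⁻¹ ^ 7 + 4 * y ^ 2 * x⁻¹ * y⁻¹ ^ 5 - 8 * y ^ 2 * x⁻¹ * y⁻¹ ^ 6 + 4 * y ^ 2 * x⁻¹ * y⁻¹ ^ 7 - y ^ 2 * x⁻¹ ^ 2 * y⁻¹ ^ 5 + 2 * y ^ 2 * x⁻¹ ^ 2 * y⁻¹ ^ 6 - y ^ 2 * x⁻¹ ^ 2 * y⁻¹ ^ 7 - y ^ 3 * y⁻¹ ^ 3 + 2 * y ^ 3 * y⁻¹ ^ 4 - y ^ 3 * y⁻¹ ^ 5 - y ^ 3 * y⁻¹ ^ 6 + 2 * y ^ 3 * y⁻¹ ^ 7 + 4 * y ^ 3 * x⁻¹ * y⁻¹ ^ 6 - 8 * y ^ 3 * x⁻¹ * y⁻¹ ^ 7 - y ^ 3 * x⁻¹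 ^ 2 * y⁻¹ ^ 6 + 2 * y ^ 3 * x⁻¹ ^ 2 * y⁻¹ ^ 7 - y ^ 4 * y⁻¹ ^ 4 + 2 * y ^ 4 * y⁻¹ ^ 5 - y ^ 4 * y⁻¹ ^ 6 - y ^ 4 * y⁻¹ ^ 7 + 4 * y ^ 4 * x⁻¹ * y⁻¹ ^ 7 - y ^ 4 * x⁻¹ ^ 2 * y⁻¹ ^ 7 - y ^ 5 * y⁻¹ ^ 5 + 2 * y ^ 5 * y⁻¹ ^ 6 - y ^ 5 * y⁻¹ ^ 7 - y ^ 6 * y⁻¹ ^ 6 + 2 * y ^ 6 * y⁻¹ ^ 7 - y ^ 7 * y⁻¹ ^ 7) * hy1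

private lemma hb_aux {F : Type*} [Field F] (x y : F) (hx : x ≠ 0) (hy : y ≠ 0) :
    (1 - x⁻¹ ^ 4 * y⁻¹ ^ 4) * (1 - x⁻¹ ^ 2 * y⁻¹ ^ 2) * (1 - x⁻¹ * y⁻¹) ^ 2
      = (x⁻¹ ^ 8 * y⁻¹ ^ 8) *
        ((1 - x ^ 4 * y ^ 4) * (1 - x ^ 2 * y ^ 2) * (1 - x * y) ^ 2) := by
  have hx1 : x * x⁻¹ = 1 := mul_inv_cancel₀ hx
  have hy1 : y * y⁻¹ = 1 := mul_inv_cancel₀ hy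
  linear_combination (2 * y * x⁻¹ ^ 7 * y⁻¹ ^ 8 - 2 * y ^ 3 * x⁻¹ ^ 5 * y⁻¹ ^ 8 + 2 * y ^ 4 * x⁻¹ ^ 4 * y⁻¹ ^ 8 - 2 * y ^ 5 * x⁻¹ ^ 3 * y⁻¹ ^ 8 + 2 * y ^ 7 * x⁻¹ * y⁻¹ ^ 8 - y ^ 8 * y⁻¹ ^ 8 - 2 * x * y ^ 3 * x⁻¹ ^ 6 * y⁻¹ ^ 8 + 2 * x * y ^ 4 * x⁻¹ ^ 5 * y⁻¹ ^ 8 - 2 * x * y ^ 5 * x⁻¹ ^ 4 * y⁻¹ ^ 8 + 2 * x * y ^ 7 * x⁻¹ ^ 2 * y⁻¹ ^ 8 - x * y ^ 8 * x⁻¹ * y⁻¹ ^ 8 - 2 * x ^ 2 * y ^ 3 * x⁻¹ ^ 7 * y⁻¹ ^ 8 + 2 * x ^ 2 * y ^ 4 * x⁻¹ ^ 6 * y⁻¹ ^ 8 - 2 * x ^ 2 * y ^ 5 * x⁻¹ ^ 5 * y⁻¹ ^ 8 + 2 * x ^ 2 * y ^ 7 * x⁻¹ ^ 3 * y⁻¹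 ^ 8 - x ^ 2 * y ^ 8 * x⁻¹ ^ 2 * y⁻¹ ^ 8 + 2 * x ^ 3 * y ^ 4 * x⁻¹ ^ 7 * y⁻¹ ^ 8 - 2 * x ^ 3 * y ^ 5 * x⁻¹ ^ 6 * y⁻¹ ^ 8 + 2 * x ^ 3 * y ^ 7 * x⁻¹ ^ 4 * y⁻¹ ^ 8 - x ^ 3 * y ^ 8 * x⁻¹ ^ 3 * y⁻¹ ^ 8 - 2 * x ^ 4 * y ^ 5 * x⁻¹ ^ 7 * y⁻¹ ^ 8 + 2 * x ^ 4 * y ^ 7 * x⁻¹ ^ 5 * y⁻¹ ^ 8 - x ^ 4 * y ^ 8 * x⁻¹ ^ 4 * y⁻¹ ^ 8 + 2 * x ^ 5 * y ^ 7 * x⁻¹ ^ 6 * y⁻¹ ^ 8 - x ^ 5 * y ^ 8 * x⁻¹ ^ 5 * y⁻¹ ^ 8 + 2 * x ^ 6 * y ^ 7 * x⁻¹ ^ 7 * y⁻¹ ^ 8 - x ^ 6 * y ^ 8 * x⁻¹ ^ 6 * y⁻¹ ^ 8 - x ^ 7 * y ^ 8 * x⁻¹ ^ 7 * y⁻¹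 ^ 8) * hx1 + (-1 + 2 * x⁻¹ * y⁻¹ - 2 * x⁻¹ ^ 3 * y⁻¹ ^ 3 + 2 * x⁻¹ ^ 4 * y⁻¹ ^ 4 - 2 * x⁻¹ ^ 5 * y⁻¹ ^ 5 + 2 * x⁻¹ ^ 7 * y⁻¹ ^ 7 - y * y⁻¹ + 2 * y * x⁻¹ * y⁻¹ ^ 2 - 2 * y * x⁻¹ ^ 3 * y⁻¹ ^ 4 + 2 * y * x⁻¹ ^ 4 * y⁻¹ ^ 5 - 2 * y * x⁻¹ ^ 5 * y⁻¹ ^ 6 - y ^ 2 * y⁻¹ ^ 2 + 2 * y ^ 2 * x⁻¹ * y⁻¹ ^ 3 - 2 * y ^ 2 * x⁻¹ ^ 3 * y⁻¹ ^ 5 + 2 * y ^ 2 * x⁻¹ ^ 4 * y⁻¹ ^ 6 - 2 * y ^ 2 * x⁻¹ ^ 5 * y⁻¹ ^ 7 - y ^ 3 * y⁻¹ ^ 3 + 2 * y ^ 3 * x⁻¹ * y⁻¹ ^ 4 - 2 * y ^ 3 * x⁻¹ ^ 3 * y⁻¹ ^ 6 + 2 * y ^ 3 * x⁻¹ ^ 4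 * y⁻¹ ^ 7 - y ^ 4 * y⁻¹ ^ 4 + 2 * y ^ 4 * x⁻¹ * y⁻¹ ^ 5 - 2 * y ^ 4 * x⁻¹ ^ 3 * y⁻¹ ^ 7 - y ^ 5 * y⁻¹ ^ 5 + 2 * y ^ 5 * x⁻¹ * y⁻¹ ^ 6 - y ^ 6 * y⁻¹ ^ 6 + 2 * y ^ 6 * x⁻¹ * y⁻¹ ^ 7 - y ^ 7 * y⁻¹ ^ 7) * hy1

private lemma hc_aux {F : Type*} [Field F] (x y : F) (hx : x ≠ 0) (hy : y ≠ 0) :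
    (x⁻¹ ^ 2 * y⁻¹ ^ 8) / (x⁻¹ ^ 8 * y⁻¹ ^ 8) = x ^ 6 := by
  have hd : x⁻¹ ^ 8 * y⁻¹ ^ 8 ≠ 0 :=
    mul_ne_zero (pow_ne_zero _ (inv_ne_zero hx)) (pow_ne_zero _ (inv_ne_zero hy))
  rw [div_eq_iff hd]
  have hx1 : x * x⁻¹ = 1 := mul_inv_cancel₀ hx
  have hy1 : y * y⁻¹ = 1 := mul_inv_cancel₀ hy
  linear_combination (-x⁻¹ ^ 2 * y⁻¹ ^ 8 - x * x⁻¹ ^ 3 * y⁻¹ ^ 8 - x ^ 2 * x⁻¹ ^ 4 * y⁻¹ ^ 8 - x ^ 3 * x⁻¹ ^ 5 * y⁻¹ ^ 8 - x ^ 4 * x⁻¹ ^ 6 * y⁻¹ ^ 8 - x ^ 5 * x⁻¹ ^ 7 * y⁻¹ ^ 8) * hx1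

end Statement5Aux

/-- With `W(X,Y) = (X²Y⁶ + X²Y³ − 4XY³ + Y³ + 1)(1−Y)² /
((1 − X⁴Y⁴)(1 − X²Y²)(1 − XY)²)` in `ℚ(X,Y)`, the `ℚ`-automorphism of `ℚ(X,Y)` with
`X ↦ X⁻¹`, `Y ↦ Y⁻¹` exists, and any such automorphism sends `W` to `X⁶·W`. -/
theorem statement5 :
    (∃ φ : FractionRing (MvPolynomial (Fin 2) ℚ) ≃ₐ[ℚ] FractionRing (MvPolynomial (Fin 2) ℚ),
        φ (algebraMap (MvPolynomial (Fin 2) ℚ) (FractionRing (MvPolynomial (Fin 2) ℚ))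
            (MvPolynomial.X 0)) =
          (algebraMap (MvPolynomial (Fin 2) ℚ) (FractionRing (MvPolynomial (Fin 2) ℚ))
            (MvPolynomial.X 0))⁻¹ ∧
        φ (algebraMap (MvPolynomial (Fin 2) ℚ) (FractionRing (MvPolynomial (Fin 2) ℚ))
            (MvPolynomial.X 1)) =
          (algebraMap (MvPolynomial (Fin 2) ℚ) (FractionRing (MvPolynomial (Fin 2) ℚ))
            (MvPolynomial.X 1))⁻¹) ∧
    ∀ φ : FractionRing (MvPolynomial (Fin 2) ℚ) ≃ₐ[ℚ] FractionRing (MvPolynomial (Fin 2) ℚ),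
      ∀ x y : FractionRing (MvPolynomial (Fin 2) ℚ),
      x = algebraMap (MvPolynomial (Fin 2) ℚ) (FractionRing (MvPolynomial (Fin 2) ℚ))
            (MvPolynomial.X 0) →
      y = algebraMap (MvPolynomial (Fin 2) ℚ) (FractionRing (MvPolynomial (Fin 2) ℚ))
            (MvPolynomial.X 1) →
      φ x = x⁻¹ → φ y = y⁻¹ →
      φ ((x ^ 2 * y ^ 6 + x ^ 2 * y ^ 3 - 4 * x * y ^ 3 + y ^ 3 + 1) * (1 - y) ^ 2 /
          ((1 - x ^ 4 * y ^ 4) * (1 - x ^ 2 * y ^ 2) * (1 - x * y) ^ 2)) =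
        x ^ 6 *
          ((x ^ 2 * y ^ 6 + x ^ 2 * y ^ 3 - 4 * x * y ^ 3 + y ^ 3 + 1) * (1 - y) ^ 2 /
            ((1 - x ^ 4 * y ^ 4) * (1 - x ^ 2 * y ^ 2) * (1 - x * y) ^ 2)) := by
  constructor
  · exact ⟨phiEquiv, phiEquiv_X 0, phiEquiv_X 1⟩
  · intro φ x y hx hy hφx hφy
    have hx0 : x ≠ 0 := by rw [hx]; exact x_ne5 0
    have hy0 : y ≠ 0 := by rw [hy]; exact x_ne5 1
    have ha : φ ((x ^ 2 * y ^ 6 + x ^ 2 * y ^ 3 - 4 * x * y ^ 3 + y ^ 3 + 1) * (1 - y) ^ 2)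
        = (x⁻¹ ^ 2 * y⁻¹ ^ 8) *
          ((x ^ 2 * y ^ 6 + x ^ 2 * y ^ 3 - 4 * x * y ^ 3 + y ^ 3 + 1) * (1 - y) ^ 2) := by
      simp only [map_mul, map_add, map_sub, map_pow, map_one, map_ofNat, hφx, hφy]
      exact ha_aux x y hx0 hy0
    have hb : φ ((1 - x ^ 4 * y ^ 4) * (1 - x ^ 2 * y ^ 2) * (1 - x * y) ^ 2)
        = (x⁻¹ ^ 8 * y⁻¹ ^ 8) *
          ((1 - x ^ 4 * y ^ 4) * (1 - x ^ 2 * y ^ 2) * (1 - x * y) ^ 2) := by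
      simp only [map_mul, map_sub, map_pow, map_one, hφx, hφy]
      exact hb_aux x y hx0 hy0
    rw [map_div₀, ha, hb, mul_div_mul_comm, hc_aux x y hx0 hy0]
end

section
/- Let k be a number field, let f ∈ k[X₁^{±1},…,X_n^{±1}] be a Laurent polynomial, and let C ⊆ ℝ^n be a rational polyhedral cone (the set of nonnegative real linear combinations of finitely many vectors in ℚ^n). Then the following are equivalent: (1) the Newton polytope Newton(f) (the convex hull in ℝ^n of the support of f) is contained in the dual cone C* = {ω ∈ ℝ^n : ⟨α,ω⟩ ≥ 0 for all α ∈ C}; (2) there exists a finite set S of non-archimedean places of k such that for every non-archimedean place v of k not in S, every finite field extension K of the v-adic completion k_v (equipped with the normalized discrete valuation ν_K with ν_K(K^×) = ℤ extending the valuation of k_v), and every x ∈ (K^×)^n with (ν_K(x₁),…,ν_K(x_n)) ∈ C, one has ν_K(f(x)) ≥ 0. -/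
open IsDedekindDomain NumberField Multiplicative WithZero

set_option synthInstance.maxHeartbeats 1000000
set_option maxHeartbeats 1000000


section AbstractVal

variable {K : Type*} [Field K] (ν : K → ℤ)
  (hmul : ∀ x y : K, x ≠ 0 → y ≠ 0 → ν (x * y) = ν x + ν y)

include hmul

lemma nu_one : ν 1 = 0 := by
  have := hmul 1 1 one_ne_zero one_ne_zero
  simp only [mul_one] at this; omega

lemma nu_neg {x : K} (hx : x ≠ 0) : ν (-x) = ν x := by
  have h1 : ν (-1 : K) = 0 := by
    have := hmul (-1 : K) (-1) (by simp) (by simp)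
    rw [neg_mul_neg, one_mul, nu_one ν hmul] at this; omega
  calc ν (-x) = ν ((-1) * x) := by ring_nf
    _ = ν x := by rw [hmul _ _ (by simp) hx, h1, zero_add]

lemma nu_inv {x : K} (hx : x ≠ 0) : ν x⁻¹ = -ν x := by
  have := hmul x x⁻¹ hx (inv_ne_zero hx)
  rw [mul_inv_cancel₀ hx, nu_one ν hmul] at this; omega

lemma nu_pow {x : K} (hx : x ≠ 0) (m : ℕ) : ν (x ^ m) = m * ν x := by
  induction m with
  | zero => simpa using nu_one ν hmul
  | succ m ih =>
      rw [pow_succ, hmul _ _ (pow_ne_zero _ hx) hx, ih]; push_cast; ring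

lemma nu_zpow {x : K} (hx : x ≠ 0) (m : ℤ) : ν (x ^ m) = m * ν x := by
  cases m with
  | ofNat m => simpa [zpow_natCast] using nu_pow ν hmul hx m
  | negSucc m =>
      rw [zpow_negSucc, nu_inv ν hmul (pow_ne_zero _ hx), nu_pow ν hmul hx,
        Int.negSucc_eq]
      push_cast; ring

lemma nu_prod {ι : Type*} (s : Finset ι) (g : ι → K) (hg : ∀ i ∈ s, g i ≠ 0) :
    ν (∏ i ∈ s, g i) = ∑ i ∈ s, ν (g i) := by
  classical
  induction s using Finset.induction with
  | empty => simpa using nu_one ν hmul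
  | insert a s hi ih =>
      have hprod : (∏ i ∈ s, g i) ≠ 0 :=
        Finset.prod_ne_zero_iff.mpr fun i hi => hg i (Finset.mem_insert_of_mem hi)
      rw [Finset.prod_insert hi, Finset.sum_insert hi,
        hmul _ _ (hg a (Finset.mem_insert_self a s)) hprod,
        ih fun i hi => hg i (Finset.mem_insert_of_mem hi)]

variable (hadd : ∀ x y : K, x ≠ 0 → y ≠ 0 → x + y ≠ 0 → min (ν x) (ν y) ≤ ν (x + y))

include hadd

lemma nu_sum_ge {ι : Type*} (s : Finset ι) (g : ι → K) (b : ℤ)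
    (hg : ∀ i ∈ s, g i ≠ 0 ∧ b ≤ ν (g i)) :
    (∑ i ∈ s, g i) = 0 ∨ ((∑ i ∈ s, g i) ≠ 0 ∧ b ≤ ν (∑ i ∈ s, g i)) := by
  classical
  induction s using Finset.induction with
  | empty => simp
  | insert a s hi ih =>
      rw [Finset.sum_insert hi]
      have ha := hg a (Finset.mem_insert_self a s)
      rcases ih (fun i hi => hg i (Finset.mem_insert_of_mem hi)) with h0 | ⟨hne, hb⟩
      · rw [h0, add_zero]; right; exact ha
      · by_cases hz : g a + ∑ i ∈ s, g i = 0
        · exact Or.inl hz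
        · right
          refine ⟨hz, le_trans ?_ (hadd _ _ ha.1 hne hz)⟩
          exact le_min ha.2 hb

lemma nu_dominant {u w : K} (hu : u ≠ 0) (hw : w = 0 ∨ (w ≠ 0 ∧ ν u < ν w)) :
    u + w ≠ 0 ∧ ν (u + w) = ν u := by
  rcases hw with rfl | ⟨hw0, hlt⟩
  · simpa using hu
  · have hne : u + w ≠ 0 := by
      intro h
      have : u = -w := by linear_combination h
      rw [this, nu_neg ν hmul hw0] at hlt; omega
    refine ⟨hne, ?_⟩
    have h1 : min (ν u) (ν w) ≤ ν (u + w) := hadd u w hu hw0 hne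
    have h2 : min (ν (u + w)) (ν (-w)) ≤ ν u := by
      have : (u + w) + (-w) = u := by ring
      have := hadd (u + w) (-w) hne (neg_ne_zero.mpr hw0) (by rw [this]; exact hu)
      rwa [‹(u + w) + (-w) = u›] at this
    rw [nu_neg ν hmul hw0] at h2
    omega

end AbstractVal
noncomputable section NuV

variable {L : Type*} [Field L] [Valued L ℤᵐ⁰]

/-- The additive normalized valuation attached to a `ℤᵐ⁰`-valued valuation. -/
def nuv (z : L) : ℤ :=
  if h : (Valued.v z : ℤᵐ⁰) = 0 then 0 else -Multiplicative.toAdd (WithZero.unzero h)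

lemma valued_ne_zero {z : L} (hz : z ≠ 0) : (Valued.v z : ℤᵐ⁰) ≠ 0 :=
  (Valuation.ne_zero_iff _).mpr hz

lemma nuv_of_valued_eq {z : L} {w : Multiplicative ℤ} (h : Valued.v z = (w : ℤᵐ⁰)) :
    nuv z = -Multiplicative.toAdd w := by
  have hz : (Valued.v z : ℤᵐ⁰) ≠ 0 := by rw [h]; exact WithZero.coe_ne_zero
  rw [nuv, dif_neg hz]
  congr 1
  have : ((WithZero.unzero hz : Multiplicative ℤ) : ℤᵐ⁰) = (w : ℤᵐ⁰) := by
    rw [WithZero.coe_unzero]; exact h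
  exact congrArg Multiplicative.toAdd (WithZero.coe_inj.mp this)

lemma nuv_mul {x y : L} (hx : x ≠ 0) (hy : y ≠ 0) : nuv (x * y) = nuv x + nuv y := by
  have hvx := valued_ne_zero hx
  have hvy := valued_ne_zero hy
  have hvxy := valued_ne_zero (mul_ne_zero hx hy)
  rw [nuv, nuv, nuv, dif_neg hvx, dif_neg hvy, dif_neg hvxy]
  have hmul : (Valued.v (x * y) : ℤᵐ⁰) = Valued.v x * Valued.v y := Valuation.map_mul _ _ _
  have : WithZero.unzero hvxy = WithZero.unzero hvx * WithZero.unzero hvy := by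
    apply WithZero.coe_inj.mp
    rw [WithZero.coe_mul, WithZero.coe_unzero, WithZero.coe_unzero, WithZero.coe_unzero, hmul]
  rw [this, toAdd_mul]; ring

lemma nuv_le_of_valued_le {x y : L} (hx : x ≠ 0) (hy : y ≠ 0)
    (h : (Valued.v x : ℤᵐ⁰) ≤ Valued.v y) : nuv y ≤ nuv x := by
  have hvx := valued_ne_zero hx
  have hvy := valued_ne_zero hy
  rw [nuv, nuv, dif_neg hvx, dif_neg hvy, neg_le_neg_iff]
  have : ((WithZero.unzero hvx : Multiplicative ℤ) : ℤᵐ⁰) ≤ ((WithZero.unzero hvy : Multiplicative ℤ) : ℤᵐ⁰) := by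
    rw [WithZero.coe_unzero, WithZero.coe_unzero]; exact h
  exact WithZero.coe_le_coe.mp this

lemma nuv_add {x y : L} (hx : x ≠ 0) (hy : y ≠ 0) (hxy : x + y ≠ 0) :
    min (nuv x) (nuv y) ≤ nuv (x + y) := by
  have h := Valuation.map_add (Valued.v) x y
  rcases max_cases (Valued.v x : ℤᵐ⁰) (Valued.v y) with ⟨heq, _⟩ | ⟨heq, _⟩ <;>
    rw [heq] at h
  · exact le_trans (min_le_left _ _) (nuv_le_of_valued_le hxy hx h)
  · exact le_trans (min_le_right _ _) (nuv_le_of_valued_le hxy hy h)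

lemma nuv_nonneg_iff {a : L} (ha : a ≠ 0) : 0 ≤ nuv a ↔ (Valued.v a : ℤᵐ⁰) ≤ 1 := by
  have hva := valued_ne_zero ha
  rw [nuv, dif_neg hva]
  have h1 : ((1 : Multiplicative ℤ) : ℤᵐ⁰) = 1 := rfl
  constructor
  · intro h
    have : WithZero.unzero hva ≤ 1 := by
      rw [← Multiplicative.toAdd_le, toAdd_one]; omega
    calc (Valued.v a : ℤᵐ⁰) = ((WithZero.unzero hva : Multiplicative ℤ) : ℤᵐ⁰) :=
        (WithZero.coe_unzero hva).symm
      _ ≤ ((1 : Multiplicative ℤ) : ℤᵐ⁰) := WithZero.coe_le_coe.mpr this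
      _ = 1 := h1
  · intro h
    have : ((WithZero.unzero hva : Multiplicative ℤ) : ℤᵐ⁰) ≤ ((1 : Multiplicative ℤ) : ℤᵐ⁰) := by
      rw [WithZero.coe_unzero, h1]; exact h
    have := Multiplicative.toAdd_le.mpr (WithZero.coe_le_coe.mp this)
    rw [toAdd_one] at this; omega

lemma nuv_eq_zero_of_valued_eq_one {z : L} (h : (Valued.v z : ℤᵐ⁰) = 1) : nuv z = 0 := by
  have : (Valued.v z : ℤᵐ⁰) = ((1 : Multiplicative ℤ) : ℤᵐ⁰) := h
  rw [nuv_of_valued_eq this, toAdd_one, neg_zero]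

end NuV

section Finiteness

variable (k : Type) [Field k] [NumberField k]

open IsDedekindDomain in
lemma finite_not_le_one (c : k) (hc : c ≠ 0) :
    {v : HeightOneSpectrum (𝓞 k) | ¬ v.valuation k c ≤ 1}.Finite := by
  exact (HeightOneSpectrum.Support.finite (𝓞 k) c).subset fun v hv => not_le.mp hv

lemma finite_valuation_ne_one (c : k) (hc : c ≠ 0) :
    {v : HeightOneSpectrum (𝓞 k) | v.valuation k c ≠ 1}.Finite := by
  apply Set.Finite.subset ((finite_not_le_one k c hc).union
    (finite_not_le_one k c⁻¹ (inv_ne_zero hc)))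
  intro v hv
  simp only [Set.mem_setOf_eq, Set.mem_union]
  by_contra hcon
  push_neg at hcon
  obtain ⟨h1, h2⟩ := hcon
  apply hv
  apply le_antisymm h1
  have hmul : v.valuation k c * v.valuation k c⁻¹ = 1 := by
    rw [← Valuation.map_mul, mul_inv_cancel₀ hc, Valuation.map_one]
  calc (1 : ℤᵐ⁰) = v.valuation k c * v.valuation k c⁻¹ := hmul.symm
    _ ≤ v.valuation k c * 1 := mul_le_mul_right h2 _
    _ = v.valuation k c := mul_one _

end Finiteness

lemma hos_infinite (k : Type) [Field k] [NumberField k] :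
    Infinite (HeightOneSpectrum (𝓞 k)) := by
  have hinj : Function.Injective (algebraMap ℤ (𝓞 k)) := fun a b h => by
    simpa using congrArg (algebraMap (𝓞 k) k) h
  have hker : RingHom.ker (algebraMap ℤ (𝓞 k)) = ⊥ :=
    (RingHom.injective_iff_ker_eq_bot _).mp hinj
  have key : ∀ p : Nat.Primes, ∃ v : HeightOneSpectrum (𝓞 k),
      Ideal.comap (algebraMap ℤ (𝓞 k)) v.asIdeal = Ideal.span {((p : ℕ) : ℤ)} := by
    intro p
    have hp : Prime ((p : ℕ) : ℤ) := Nat.prime_iff_prime_int.mp p.2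
    have hmax : (Ideal.span {((p : ℕ) : ℤ)}).IsMaximal :=
      PrincipalIdealRing.isMaximal_of_irreducible hp.irreducible
    obtain ⟨Q, hQmax, hQcomap⟩ :=
      Ideal.exists_ideal_over_maximal_of_isIntegral (S := 𝓞 k)
        (Ideal.span {((p : ℕ) : ℤ)}) (by rw [hker]; exact bot_le)
    have hQbot : Q ≠ ⊥ := by
      intro h
      rw [h] at hQcomap
      have : ((p : ℕ) : ℤ) ∈ Ideal.comap (algebraMap ℤ (𝓞 k)) (⊥ : Ideal (𝓞 k)) := by
        rw [hQcomap]; exact Ideal.subset_span rfl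
      simp only [Ideal.mem_comap, Ideal.mem_bot] at this
      have h0 : algebraMap ℤ (𝓞 k) ((p : ℕ) : ℤ) = algebraMap ℤ (𝓞 k) 0 := by
        simpa using this
      exact hp.ne_zero (hinj h0)
    exact ⟨⟨Q, hQmax.isPrime, hQbot⟩, hQcomap⟩
  choose v hv using key
  refine Infinite.of_injective v fun p q h => ?_
  have : Ideal.span {((p : ℕ) : ℤ)} = Ideal.span {((q : ℕ) : ℤ)} := by
    rw [← hv p, ← hv q, h]
  have hassoc := Ideal.span_singleton_eq_span_singleton.mp this
  have : ((p : ℕ) : ℤ) = ((q : ℕ) : ℤ) := by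
    rcases Int.associated_iff.mp hassoc with h' | h' <;> omega
  exact Subtype.ext (by exact_mod_cast this)

lemma laurent_exists_ne_zero {k : Type*} [Field k] [Infinite k] {n : ℕ}
    (T : Finset (Fin n → ℤ)) (c : (Fin n → ℤ) → k) (hT : T.Nonempty)
    (hc : ∀ α ∈ T, c α ≠ 0) :
    ∃ y : Fin n → k, (∀ i, y i ≠ 0) ∧ (∑ α ∈ T, c α * ∏ i, y i ^ (α i)) ≠ 0 := by
  classical
  set L : Fin n → ℤ := fun i => T.inf' hT (fun α => α i) with hL
  have hshift_nonneg : ∀ α ∈ T, ∀ i, 0 ≤ α i - L i := fun α hα i =>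
    sub_nonneg.mpr (Finset.inf'_le _ hα)
  set shift : (Fin n → ℤ) → (Fin n →₀ ℕ) := fun α =>
    Finsupp.equivFunOnFinite.symm (fun i => (α i - L i + 1).toNat) with hshift
  have hshift_apply : ∀ α i, shift α i = (α i - L i + 1).toNat := fun α i => rfl
  have hshift_cast : ∀ α ∈ T, ∀ i, ((shift α i : ℤ)) = α i - L i + 1 := by
    intro α hα i
    rw [hshift_apply, Int.toNat_of_nonneg (by have := hshift_nonneg α hα i; omega)]
  have hshift_inj : ∀ α ∈ T, ∀ β ∈ T, shift α = shift β → α = β := by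
    intro α hα β hβ h
    funext i
    have h1 := hshift_cast α hα i
    have h2 := hshift_cast β hβ i
    have : shift α i = shift β i := by rw [h]
    omega
  set P : MvPolynomial (Fin n) k := ∑ α ∈ T, MvPolynomial.monomial (shift α) (c α) with hP
  obtain ⟨α₁, hα₁⟩ := hT
  have hPne : P ≠ 0 := by
    intro h0
    have hcoeff : MvPolynomial.coeff (shift α₁) P = c α₁ := by
      rw [hP, MvPolynomial.coeff_sum]
      rw [Finset.sum_eq_single α₁]
      · simp [MvPolynomial.coeff_monomial]
      · intro β hβ hne
        rw [MvPolynomial.coeff_monomial, if_neg]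
        intro h; exact hne (hshift_inj β hβ α₁ hα₁ h)
      · intro h; exact absurd hα₁ h
    rw [h0] at hcoeff
    exact hc α₁ hα₁ (by simpa using hcoeff.symm)
  have hex : ∃ y : Fin n → k, MvPolynomial.eval y P ≠ 0 := by
    by_contra h
    push_neg at h
    exact hPne (MvPolynomial.funext (q := 0) (by simpa using h))
  obtain ⟨y, hy⟩ := hex
  have heval : MvPolynomial.eval y P = ∑ α ∈ T, c α * ∏ i, y i ^ (shift α i) := by
    rw [hP, map_sum]
    refine Finset.sum_congr rfl fun α hα => ?_
    rw [MvPolynomial.eval_monomial]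
    congr 1
    exact Finsupp.prod_fintype _ _ (fun i => pow_zero _)
  have hyne : ∀ i, y i ≠ 0 := by
    intro i hyi
    apply hy
    rw [heval]
    refine Finset.sum_eq_zero fun α hα => ?_
    have : y i ^ (shift α i) = 0 := by
      rw [hyi]
      apply zero_pow
      have := hshift_cast α hα i
      have := hshift_nonneg α hα i
      omega
    rw [Finset.prod_eq_zero (Finset.mem_univ i) this, mul_zero]
  refine ⟨y, hyne, ?_⟩
  intro hsum
  apply hy
  rw [heval]
  have key : ∀ α ∈ T, (∏ i, y i ^ (shift α i) : k)
      = (∏ i, y i ^ (α i)) * ∏ i, y i ^ (1 - L i) := by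
    intro α hα
    rw [← Finset.prod_mul_distrib]
    refine Finset.prod_congr rfl fun i _ => ?_
    rw [← zpow_natCast (y i), hshift_cast α hα i, ← zpow_add₀ (hyne i)]
    congr 1; ring
  calc (∑ α ∈ T, c α * ∏ i, y i ^ (shift α i))
      = ∑ α ∈ T, (c α * ∏ i, y i ^ (α i)) * ∏ i, y i ^ (1 - L i) := by
        refine Finset.sum_congr rfl fun α hα => ?_
        rw [key α hα]; ring
    _ = (∑ α ∈ T, c α * ∏ i, y i ^ (α i)) * ∏ i, y i ^ (1 - L i) := by
        rw [← Finset.sum_mul]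
    _ = 0 := by rw [hsum, zero_mul]

lemma prod_zpow_sum {G₀ : Type*} [CommGroupWithZero G₀] (a : G₀) (ha : a ≠ 0)
    {ι : Type*} (s : Finset ι) (e : ι → ℤ) :
    ∏ i ∈ s, a ^ (e i) = a ^ (∑ i ∈ s, e i) := by
  classical
  induction s using Finset.induction with
  | empty => simp
  | insert c s hi ih =>
      rw [Finset.prod_insert hi, Finset.sum_insert hi, ih, ← zpow_add₀ ha]

lemma backward_key (k : Type) [Field k] [NumberField k] (n mm : ℕ)
    (f : (Fin n → ℤ) →₀ k) (g : Fin mm → (Fin n → ℚ))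
    (S : Finset (HeightOneSpectrum (𝓞 k)))
    (hS : ∀ v : HeightOneSpectrum (𝓞 k), v ∉ S →
      ∀ (K : Type) [Field K] [Algebra (v.adicCompletion k) K]
        [FiniteDimensional (v.adicCompletion k) K],
      ∀ ν : K → ℤ,
        (∀ x y : K, x ≠ 0 → y ≠ 0 → ν (x * y) = ν x + ν y) →
        (∀ x y : K, x ≠ 0 → y ≠ 0 → x + y ≠ 0 → min (ν x) (ν y) ≤ ν (x + y)) →
        (∀ z : ℤ, ∃ x : K, x ≠ 0 ∧ ν x = z) →
        (∀ a : v.adicCompletion k, a ≠ 0 →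
          (0 ≤ ν (algebraMap (v.adicCompletion k) K a) ↔ Valued.v a ≤ 1)) →
      ∀ x : Fin n → K, (∀ i, x i ≠ 0) →
        (fun i => (ν (x i) : ℝ)) ∈ { x : Fin n → ℝ | ∃ t : Fin mm → ℝ, (∀ j, 0 ≤ t j) ∧
          x = ∑ j, t j • (fun i => (g j i : ℝ)) } →
        ((∑ α ∈ f.support, algebraMap (v.adicCompletion k) K
            (algebraMap k (v.adicCompletion k) (f α)) * ∏ i, x i ^ (α i)) = 0 ∨
          0 ≤ ν (∑ α ∈ f.support, algebraMap (v.adicCompletion k) K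
            (algebraMap k (v.adicCompletion k) (f α)) * ∏ i, x i ^ (α i))))
    (α₀ : Fin n → ℤ) (hα₀ : α₀ ∈ f.support) (j : Fin mm)
    (hneg : (∑ i, g j i * (α₀ i : ℚ)) < 0) : False := by
  classical
  set q : Fin n → ℚ := g j with hqdef
  set d : ℕ := ∏ i, (q i).den with hddef
  have hdpos : 0 < d := Finset.prod_pos fun i _ => (q i).pos
  set b : Fin n → ℤ := fun i => (q i).num * ((d / (q i).den : ℕ) : ℤ) with hbdef
  have hb : ∀ i, (b i : ℚ) = (d : ℚ) * q i := by
    intro i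
    have hdvd : (q i).den ∣ d := Finset.dvd_prod_of_mem _ (Finset.mem_univ i)
    have hden0 : ((q i).den : ℚ) ≠ 0 := Nat.cast_ne_zero.mpr (q i).den_nz
    have hcast : ((d / (q i).den : ℕ) : ℚ) = (d : ℚ) / ((q i).den : ℚ) :=
      Nat.cast_div hdvd hden0
    have hcast2 : (((d / (q i).den : ℕ) : ℤ) : ℚ) = (d : ℚ) / ((q i).den : ℚ) := by
      rw [Int.cast_natCast, hcast]
    calc ((b i : ℚ)) = ((q i).num : ℚ) * ((d : ℚ) / ((q i).den : ℚ)) := by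
          simp only [hbdef, Int.cast_mul, hcast2]
      _ = (d : ℚ) * (((q i).num : ℚ) / ((q i).den : ℚ)) := by ring
      _ = (d : ℚ) * q i := by rw [Rat.num_div_den]
  have hbα₀ : ∑ i, b i * α₀ i < 0 := by
    have hcast : ((∑ i, b i * α₀ i : ℤ) : ℚ) = (d : ℚ) * ∑ i, q i * (α₀ i : ℚ) := by
      push_cast
      rw [Finset.mul_sum]
      refine Finset.sum_congr rfl fun i _ => ?_
      rw [hb i]; ring
    have hlt : (d : ℚ) * (∑ i, q i * (α₀ i : ℚ)) < 0 :=
      mul_neg_of_pos_of_neg (by exact_mod_cast hdpos) hneg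
    rw [← hcast] at hlt
    exact_mod_cast hlt
  have hsupne : f.support.Nonempty := ⟨α₀, hα₀⟩
  set m : ℤ := f.support.inf' hsupne (fun α => ∑ i, b i * α i) with hmdef
  have hmneg : m < 0 := lt_of_le_of_lt (Finset.inf'_le _ hα₀) hbα₀
  have hm_le : ∀ α ∈ f.support, m ≤ ∑ i, b i * α i := fun α hα => Finset.inf'_le _ hα
  set T : Finset (Fin n → ℤ) := f.support.filter (fun α => ∑ i, b i * α i = m) with hTdef
  have hTsub : T ⊆ f.support := Finset.filter_subset _ _
  have hTne : T.Nonempty := by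
    obtain ⟨α₁, h1, h2⟩ := Finset.exists_mem_eq_inf' hsupne (fun α => ∑ i, b i * α i)
    exact ⟨α₁, Finset.mem_filter.mpr ⟨h1, h2.symm⟩⟩
  obtain ⟨y, hy0, hG⟩ := laurent_exists_ne_zero T (fun α => f α) hTne
    (fun α hα => Finsupp.mem_support_iff.mp (hTsub hα))
  set G : k := ∑ α ∈ T, f α * ∏ i, y i ^ (α i) with hGdef
  have : Infinite (HeightOneSpectrum (𝓞 k)) := hos_infinite k
  set bad : Set (HeightOneSpectrum (𝓞 k)) := (S : Set _) ∪
    ((⋃ α ∈ f.support, {v | v.valuation k (f α) ≠ 1}) ∪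
      ((⋃ i, {v | v.valuation k (y i) ≠ 1}) ∪ {v | v.valuation k G ≠ 1})) with hbaddef
  have hbadfin : bad.Finite := by
    refine (S.finite_toSet).union (Set.Finite.union ?_ (Set.Finite.union ?_ ?_))
    · exact Set.Finite.biUnion f.support.finite_toSet
        (fun α hα => finite_valuation_ne_one k (f α) (Finsupp.mem_support_iff.mp hα))
    · exact Set.finite_iUnion fun i => finite_valuation_ne_one k (y i) (hy0 i)
    · exact finite_valuation_ne_one k G hG
  obtain ⟨v, hvbad⟩ := hbadfin.infinite_compl.nonempty
  simp only [Set.mem_compl_iff, hbaddef, Set.mem_union, Set.mem_iUnion, Set.mem_setOf_eq,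
    not_or, not_exists, not_not, Finset.mem_coe] at hvbad
  obtain ⟨hvS, hvcoef, hvy, hvG⟩ := hvbad
  -- uniformizer
  obtain ⟨π₀, hπ₀⟩ := v.valuation_exists_uniformizer k
  set π : v.adicCompletion k := algebraMap k (v.adicCompletion k) π₀ with hπdef
  have hvalg : ∀ c : k, Valued.v (algebraMap k (v.adicCompletion k) c) = v.valuation k c := by
    intro c
    rw [IsDedekindDomain.HeightOneSpectrum.algebraMap_adicCompletion]
    exact IsDedekindDomain.HeightOneSpectrum.valuedAdicCompletion_eq_valuation' v c
  have hπval : Valued.v π = ((Multiplicative.ofAdd (-1 : ℤ) : Multiplicative ℤ) : ℤᵐ⁰) := by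
    rw [hπdef, hvalg, hπ₀, WithZero.exp_eq_coe_ofAdd]
  have hπ0 : π ≠ 0 := by
    intro h
    rw [h, map_zero] at hπval
    exact WithZero.zero_ne_coe hπval
  have hνπ : nuv π = 1 := by
    rw [nuv_of_valued_eq hπval, toAdd_ofAdd]; ring
  have hmul' : ∀ a c : v.adicCompletion k, a ≠ 0 → c ≠ 0 → nuv (a * c) = nuv a + nuv c :=
    fun a c ha hc => nuv_mul ha hc
  have hadd' : ∀ a c : v.adicCompletion k, a ≠ 0 → c ≠ 0 → a + c ≠ 0 →
      min (nuv a) (nuv c) ≤ nuv (a + c) := fun a c => nuv_add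
  have hginj : Function.Injective (algebraMap k (v.adicCompletion k)) :=
    (algebraMap k (v.adicCompletion k)).injective
  -- the point x
  set x : Fin n → v.adicCompletion k :=
    fun i => algebraMap k (v.adicCompletion k) (y i) * π ^ (b i) with hxdef
  have hyc0 : ∀ i, algebraMap k (v.adicCompletion k) (y i) ≠ 0 := by
    intro i h
    exact hy0 i (hginj (by rw [h, map_zero]))
  have hx0 : ∀ i, x i ≠ 0 := fun i => mul_ne_zero (hyc0 i) (zpow_ne_zero _ hπ0)
  have hνy : ∀ i, nuv (algebraMap k (v.adicCompletion k) (y i)) = 0 :=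
    fun i => nuv_eq_zero_of_valued_eq_one (by rw [hvalg]; exact hvy i)
  have hνx : ∀ i, nuv (x i) = b i := by
    intro i
    rw [hxdef, hmul' _ _ (hyc0 i) (zpow_ne_zero _ hπ0), hνy i,
      nu_zpow nuv hmul' hπ0, hνπ]
    ring
  have hxC : (fun i => (nuv (x i) : ℝ)) ∈ { z : Fin n → ℝ | ∃ t : Fin mm → ℝ,
      (∀ j, 0 ≤ t j) ∧ z = ∑ j', t j' • (fun i => (g j' i : ℝ)) } := by
    refine ⟨fun j' => if j' = j then (d : ℝ) else 0, fun j' => by positivity, ?_⟩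
    funext i
    have hsum : (∑ j', (if j' = j then (d : ℝ) else 0) • (fun i => (g j' i : ℝ))) i
        = (d : ℝ) * (g j i : ℝ) := by
      rw [Finset.sum_apply]
      rw [Finset.sum_eq_single j]
      · simp
      · intro j' _ hne; simp [hne]
      · intro h; exact absurd (Finset.mem_univ j) h
    rw [hsum, hνx i]
    have h2 : ((b i : ℝ)) = (d : ℝ) * ((q i : ℚ) : ℝ) := by exact_mod_cast hb i
    rw [h2, hqdef]
  -- apply the hypothesis
  have hres := hS v hvS (v.adicCompletion k) nuv hmul' hadd'
    (fun z => ⟨π ^ z, zpow_ne_zero _ hπ0, by rw [nu_zpow nuv hmul' hπ0, hνπ, mul_one]⟩)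
    (fun a ha => by rw [Algebra.algebraMap_self, RingHom.id_apply]; exact nuv_nonneg_iff ha)
    x hx0 hxC
  simp only [Algebra.algebraMap_self, RingHom.id_apply] at hres
  -- compute the sum
  set term : (Fin n → ℤ) → v.adicCompletion k :=
    fun α => algebraMap k (v.adicCompletion k) (f α) * ∏ i, x i ^ (α i) with htermdef
  have hterm_eq : ∀ α : Fin n → ℤ, term α = (algebraMap k (v.adicCompletion k) (f α) *
      ∏ i, algebraMap k (v.adicCompletion k) (y i) ^ (α i)) * π ^ (∑ i, b i * α i) := by
    intro α
    rw [htermdef]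
    have : ∀ i, x i ^ (α i) = algebraMap k (v.adicCompletion k) (y i) ^ (α i)
        * π ^ (b i * α i) := by
      intro i
      rw [hxdef, mul_zpow, ← zpow_mul]
    simp_rw [this]
    rw [Finset.prod_mul_distrib, prod_zpow_sum π hπ0]
    ring
  have hYα : ∀ α : Fin n → ℤ, (∏ i, algebraMap k (v.adicCompletion k) (y i) ^ (α i)) ≠ 0 :=
    fun α => Finset.prod_ne_zero_iff.mpr fun i _ => zpow_ne_zero _ (hyc0 i)
  have hνYα : ∀ α : Fin n → ℤ, nuv (∏ i, algebraMap k (v.adicCompletion k) (y i) ^ (α i)) = 0 := by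
    intro α
    rw [nu_prod nuv hmul' Finset.univ _ (fun i _ => zpow_ne_zero _ (hyc0 i))]
    refine Finset.sum_eq_zero fun i _ => ?_
    rw [nu_zpow nuv hmul' (hyc0 i), hνy i, mul_zero]
  have hcoef0 : ∀ α ∈ f.support, algebraMap k (v.adicCompletion k) (f α) ≠ 0 := by
    intro α hα h
    exact Finsupp.mem_support_iff.mp hα (hginj (by rw [h, map_zero]))
  have hνcoef : ∀ α ∈ f.support, nuv (algebraMap k (v.adicCompletion k) (f α)) = 0 :=
    fun α hα => nuv_eq_zero_of_valued_eq_one (by rw [hvalg]; exact hvcoef α hα)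
  -- u part
  set u : v.adicCompletion k := algebraMap k (v.adicCompletion k) G * π ^ m with hudef
  have hGc0 : algebraMap k (v.adicCompletion k) G ≠ 0 := by
    intro h
    exact hG (hginj (by rw [h, map_zero]))
  have hu0 : u ≠ 0 := mul_ne_zero hGc0 (zpow_ne_zero _ hπ0)
  have hνu : nuv u = m := by
    rw [hudef, hmul' _ _ hGc0 (zpow_ne_zero _ hπ0),
      nuv_eq_zero_of_valued_eq_one (by rw [hvalg]; exact hvG),
      nu_zpow nuv hmul' hπ0, hνπ]
    ring
  have huT : (∑ α ∈ T, term α) = u := by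
    rw [hudef, hGdef, map_sum (algebraMap k (v.adicCompletion k)) (fun α => f α * ∏ i, y i ^ (α i)) T, Finset.sum_mul]
    refine Finset.sum_congr rfl fun α hα => ?_
    have hαm : ∑ i, b i * α i = m := (Finset.mem_filter.mp hα).2
    rw [hterm_eq α, hαm, map_mul, map_prod]
    simp_rw [map_zpow₀]
  -- w part
  set w : v.adicCompletion k := ∑ α ∈ f.support.filter (fun α => ¬ (∑ i, b i * α i = m)),
    term α with hwdef
  have hw : w = 0 ∨ (w ≠ 0 ∧ m + 1 ≤ nuv w) := by
    refine nu_sum_ge nuv hmul' hadd' _ _ (m+1) fun α hα => ?_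
    obtain ⟨hαsup, hαne⟩ := Finset.mem_filter.mp hα
    have h1 : term α ≠ 0 := by
      rw [hterm_eq α]
      exact mul_ne_zero (mul_ne_zero (hcoef0 α hαsup) (hYα α)) (zpow_ne_zero _ hπ0)
    refine ⟨h1, ?_⟩
    rw [hterm_eq α, hmul' _ _ (mul_ne_zero (hcoef0 α hαsup) (hYα α)) (zpow_ne_zero _ hπ0),
      hmul' _ _ (hcoef0 α hαsup) (hYα α), hνcoef α hαsup, hνYα α,
      nu_zpow nuv hmul' hπ0, hνπ]
    have h2 : m + 1 ≤ ∑ i, b i * α i :=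
      Int.add_one_le_iff.mpr (lt_of_le_of_ne (hm_le α hαsup) (fun h => hαne h.symm))
    simpa using h2
  have hF : (∑ α ∈ f.support, term α) = u + w := by
    rw [← huT, hwdef, hTdef]
    exact (Finset.sum_filter_add_sum_filter_not f.support _ term).symm
  have hdom := nu_dominant nuv hmul' hadd' hu0 (u := u) (w := w)
    (hw.imp id (fun h => ⟨h.1, hνu ▸ lt_of_lt_of_le (lt_add_one m) h.2⟩))
  rcases hres with h0 | hge
  · rw [hF] at h0; exact hdom.1 h0
  · rw [hF] at hge
    rw [hdom.2, hνu] at hge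
    exact absurd hge (not_le.mpr hmneg)
/-- For a number field `k`, a Laurent polynomial `f` over `k` and a rational
polyhedral cone `C ⊆ ℝ^n`, the Newton polytope of `f` is contained in the dual cone `C*`
if and only if for all non-archimedean places `v` of `k` outside some finite set, all
finite extensions `K` of the completion `k_v` (with normalized discrete valuation `ν_K`
with `ν_K(K^×) = ℤ` extending the `v`-adic valuation), and all `x ∈ (K^×)^n` with
`(ν_K(x₁),…,ν_K(x_n)) ∈ C`, one has `ν_K(f(x)) ≥ 0`. -/
theorem statement12 (k : Type) [Field k] [NumberField k] (n : ℕ)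
    (f : (Fin n → ℤ) →₀ k) (C : Set (Fin n → ℝ))
    (hC : ∃ (m : ℕ) (g : Fin m → (Fin n → ℚ)),
      C = { x : Fin n → ℝ | ∃ t : Fin m → ℝ, (∀ j, 0 ≤ t j) ∧
        x = ∑ j, t j • (fun i => (g j i : ℝ)) }) :
    (convexHull ℝ
        ((fun α : Fin n → ℤ => fun i => (α i : ℝ)) '' (f.support : Set (Fin n → ℤ))) ⊆
      { ω : Fin n → ℝ | ∀ a ∈ C, 0 ≤ ∑ i, a i * ω i }) ↔
    ∃ S : Finset (HeightOneSpectrum (𝓞 k)),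
      ∀ v : HeightOneSpectrum (𝓞 k), v ∉ S →
      ∀ (K : Type) [Field K] [Algebra (v.adicCompletion k) K]
        [FiniteDimensional (v.adicCompletion k) K],
      ∀ ν : K → ℤ,
        (∀ x y : K, x ≠ 0 → y ≠ 0 → ν (x * y) = ν x + ν y) →
        (∀ x y : K, x ≠ 0 → y ≠ 0 → x + y ≠ 0 → min (ν x) (ν y) ≤ ν (x + y)) →
        (∀ z : ℤ, ∃ x : K, x ≠ 0 ∧ ν x = z) →
        (∀ a : v.adicCompletion k, a ≠ 0 →
          (0 ≤ ν (algebraMap (v.adicCompletion k) K a) ↔ Valued.v a ≤ 1)) →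
      ∀ x : Fin n → K, (∀ i, x i ≠ 0) →
        (fun i => (ν (x i) : ℝ)) ∈ C →
        ((∑ α ∈ f.support, algebraMap (v.adicCompletion k) K
            (algebraMap k (v.adicCompletion k) (f α)) * ∏ i, x i ^ (α i)) = 0 ∨
          0 ≤ ν (∑ α ∈ f.support, algebraMap (v.adicCompletion k) K
            (algebraMap k (v.adicCompletion k) (f α)) * ∏ i, x i ^ (α i))) := by
  classical
  constructor
  · -- forward direction
    intro hNewt
    have hbadfin : (⋃ α ∈ f.support, {v : HeightOneSpectrum (𝓞 k) |
        ¬ v.valuation k (f α) ≤ 1}).Finite := by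
      apply Set.Finite.biUnion (f.support.finite_toSet)
      intro α hα
      exact finite_not_le_one k (f α) (Finsupp.mem_support_iff.mp hα)
    refine ⟨hbadfin.toFinset, ?_⟩
    intro v hv K _ _ _ ν hmul hadd hsurj hcompat x hx hxC
    have hterm : ∀ α ∈ f.support,
        (algebraMap (v.adicCompletion k) K
          (algebraMap k (v.adicCompletion k) (f α)) * ∏ i, x i ^ (α i)) ≠ 0 ∧
        (0 : ℤ) ≤ ν (algebraMap (v.adicCompletion k) K
          (algebraMap k (v.adicCompletion k) (f α)) * ∏ i, x i ^ (α i)) := by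
      intro α hα
      have hfα : f α ≠ 0 := Finsupp.mem_support_iff.mp hα
      have hc0 : algebraMap k (v.adicCompletion k) (f α) ≠ 0 := by
        intro h
        apply hfα
        apply (algebraMap k (v.adicCompletion k)).injective
        rw [h, map_zero]
      have hcK : algebraMap (v.adicCompletion k) K
          (algebraMap k (v.adicCompletion k) (f α)) ≠ 0 := by
        intro h
        apply hc0
        apply (algebraMap (v.adicCompletion k) K).injective
        rw [h, map_zero]
      have hprod_ne : (∏ i, x i ^ (α i)) ≠ 0 :=
        Finset.prod_ne_zero_iff.mpr fun i _ => zpow_ne_zero _ (hx i)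
      refine ⟨mul_ne_zero hcK hprod_ne, ?_⟩
      rw [hmul _ _ hcK hprod_ne]
      have h1 : (0:ℤ) ≤ ν (algebraMap (v.adicCompletion k) K
          (algebraMap k (v.adicCompletion k) (f α))) := by
        rw [hcompat _ hc0]
        have : Valued.v (algebraMap k (v.adicCompletion k) (f α))
            = v.valuation k (f α) := by
          rw [IsDedekindDomain.HeightOneSpectrum.algebraMap_adicCompletion]
          exact IsDedekindDomain.HeightOneSpectrum.valuedAdicCompletion_eq_valuation' v (f α)
        rw [this]
        by_contra hcon
        have : v ∈ (⋃ α ∈ f.support, {v : HeightOneSpectrum (𝓞 k) |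
            ¬ v.valuation k (f α) ≤ 1}) := by
          exact Set.mem_biUnion hα hcon
        exact hv (hbadfin.mem_toFinset.mpr this)
      have h2 : (0:ℤ) ≤ ν (∏ i, x i ^ (α i)) := by
        rw [nu_prod ν hmul Finset.univ _ (fun i _ => zpow_ne_zero _ (hx i))]
        have heq : ∀ i, ν (x i ^ (α i)) = α i * ν (x i) :=
          fun i => nu_zpow ν hmul (hx i) (α i)
        simp_rw [heq]
        have hmem : (fun i => (α i : ℝ)) ∈ convexHull ℝ
            ((fun α : Fin n → ℤ => fun i => (α i : ℝ)) '' (f.support : Set (Fin n → ℤ))) :=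
          subset_convexHull ℝ _ (Set.mem_image_of_mem _ hα)
        have hR : (0:ℝ) ≤ ∑ i, (ν (x i) : ℝ) * (α i : ℝ) := hNewt hmem _ hxC
        have hcast : ((∑ i, α i * ν (x i) : ℤ) : ℝ) = ∑ i, (ν (x i):ℝ) * (α i:ℝ) := by
          push_cast
          exact Finset.sum_congr rfl fun i _ => mul_comm _ _
        have := hR
        rw [← hcast] at this
        exact_mod_cast this
      omega
    have := nu_sum_ge ν hmul hadd f.support _ 0 hterm
    exact this.imp id And.right
  · -- backward direction
    rintro ⟨S, hS⟩
    obtain ⟨mm, g, rfl⟩ := hC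
    have hconv : Convex ℝ {ω : Fin n → ℝ | ∀ a ∈ { x : Fin n → ℝ | ∃ t : Fin mm → ℝ,
        (∀ j, 0 ≤ t j) ∧ x = ∑ j, t j • (fun i => (g j i : ℝ)) }, 0 ≤ ∑ i, a i * ω i} := by
      intro ω₁ h1 ω₂ h2 s t hs ht hst
      intro a ha
      have e : ∑ i, a i * (s • ω₁ + t • ω₂) i
          = s * ∑ i, a i * ω₁ i + t * ∑ i, a i * ω₂ i := by
        rw [Finset.mul_sum, Finset.mul_sum, ← Finset.sum_add_distrib]
        refine Finset.sum_congr rfl fun i _ => ?_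
        simp only [Pi.add_apply, Pi.smul_apply, smul_eq_mul]
        ring
      rw [e]
      exact add_nonneg (mul_nonneg hs (h1 a ha)) (mul_nonneg ht (h2 a ha))
    refine convexHull_min ?_ hconv
    rintro ω ⟨α₀, hα₀, rfl⟩
    intro a ha
    by_contra hneg0
    push_neg at hneg0
    obtain ⟨t, ht, rfl⟩ := ha
    have hswap : ∑ i, (∑ j, t j • (fun i' => (g j i' : ℝ))) i * (α₀ i : ℝ)
        = ∑ j, t j * ∑ i, (g j i : ℝ) * (α₀ i : ℝ) := by
      calc ∑ i, (∑ j, t j • (fun i' => (g j i' : ℝ))) i * (α₀ i : ℝ)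
          = ∑ i, ∑ j, t j * ((g j i : ℝ) * (α₀ i : ℝ)) := by
            refine Finset.sum_congr rfl fun i _ => ?_
            rw [Finset.sum_apply, Finset.sum_mul]
            refine Finset.sum_congr rfl fun j _ => ?_
            simp only [Pi.smul_apply, smul_eq_mul]
            ring
        _ = ∑ j, ∑ i, t j * ((g j i : ℝ) * (α₀ i : ℝ)) := Finset.sum_comm
        _ = ∑ j, t j * ∑ i, (g j i : ℝ) * (α₀ i : ℝ) := by
            refine Finset.sum_congr rfl fun j _ => ?_
            rw [Finset.mul_sum]
    rw [hswap] at hneg0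
    have hj : ∃ j, (∑ i, (g j i : ℝ) * (α₀ i : ℝ)) < 0 := by
      by_contra hall
      push_neg at hall
      exact absurd (Finset.sum_nonneg fun j _ => mul_nonneg (ht j) (hall j))
        (not_le.mpr hneg0)
    obtain ⟨j, hj⟩ := hj
    have hnegQ : (∑ i, g j i * (α₀ i : ℚ)) < 0 := by
      have hcast : ((∑ i, g j i * (α₀ i : ℚ) : ℚ) : ℝ)
          = ∑ i, (g j i : ℝ) * (α₀ i : ℝ) := by push_cast; rfl
      rw [← hcast] at hj
      exact_mod_cast hj
    exact backward_key k n mm f g S hS α₀ (Finset.mem_coe.mp hα₀) j hnegQ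
end

section
/- Let S ⊆ ℝ^n be a nonempty convex set contained in the boundary of the nonnegative orthant, i.e. every x ∈ S satisfies x_i ≥ 0 for all i and x_i = 0 for at least one i (depending on x). Then S is contained in a single coordinate hyperplane: there exists an index i ∈ {1,…,n} such that x_i = 0 for every x ∈ S. -/
/-- A nonempty convex subset of the boundary of the nonnegative orthant of
`ℝ^n` is contained in a single coordinate hyperplane. -/
theorem statement16 (n : ℕ) (S : Set (Fin n → ℝ)) (hne : S.Nonempty)
    (hconv : Convex ℝ S)
    (hbdry : ∀ x ∈ S, (∀ i, 0 ≤ x i) ∧ ∃ i, x i = 0) :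
    ∃ i : Fin n, ∀ x ∈ S, x i = 0 := by
  by_contra h
  push_neg at h
  choose f hfS hfne using h
  have hn : 0 < n := by
    obtain ⟨x, hx⟩ := hne
    obtain ⟨_, i, _⟩ := hbdry x hx
    exact i.pos
  have hy : (∑ j, (n : ℝ)⁻¹ • f j) ∈ S := by
    apply hconv.sum_mem
    · intro j _; positivity
    · rw [Finset.sum_const, Finset.card_univ, Fintype.card_fin, nsmul_eq_mul]
      field_simp
    · intro j _; exact hfS j
  obtain ⟨hpos, i, hi⟩ := hbdry _ hy
  have hlt : 0 < (∑ j, (n : ℝ)⁻¹ • f j) i := by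
    rw [Finset.sum_apply]
    apply Finset.sum_pos'
    · intro j _
      have := (hbdry (f j) (hfS j)).1 i
      have : 0 ≤ f j i := this
      simp only [Pi.smul_apply, smul_eq_mul]
      positivity
    · refine ⟨i, Finset.mem_univ i, ?_⟩
      have h0 : 0 ≤ f i i := (hbdry (f i) (hfS i)).1 i
      have hne' : f i i ≠ 0 := hfne i
      have : 0 < f i i := lt_of_le_of_ne h0 (Ne.symm hne')
      simp only [Pi.smul_apply, smul_eq_mul]
      positivity
  exact hlt.ne' (hi ▸ rfl) |>.elim
end
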